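/- Let G be a finite p-group and U₁ ≤ U₂ two normal subgroups of G. Then for every finitely generated F_p[G]-module M, dim_{F_p}(F_p ⊗_{F_p[U₁]} M)/|G:U₁| ≤ dim_{F_p}(F_p ⊗_{F_p[U₂]} M)/|G:U₂|. -/

import Mathlib

/-!
Let `N` be the `U₁`-coinvariants of `M`. `U₁` acts trivially on `N`, and since `U₂` is normal the
`U₂`-coinvariants of `M` are those of the `𝔽_p`-representation of `U₂` on `N`. A `p`-group acting
on a nonzero finite `𝔽_p`-space fixes a nonzero functional on it (fixed points of a `p`-group on a
set of `p`-power size), so every nonzero quotient representation has nonzero coinvariants. By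
this Nakayama argument, lifts of a basis of `N_{U₂}` generate `N` as a representation, so their
translates by representatives of `U₂ / U₁` span `N`: `dim N ≤ |U₂ : U₁| · dim N_{U₂}`. Divide by
`|G : U₁| = |U₂ : U₁| · |G : U₂|`.
-/

/-- For a module `M` over a group algebra `K[G]` and a subgroup `U ≤ G`, the submodule
generated by the elements `u • m - m` (`u ∈ U`, `m ∈ M`); the quotient by it is the
module of `U`-coinvariants `K ⊗_{K[U]} M`. -/
noncomputable def coinvKer (K : Type) [Field K] (G : Type) [Group G] (U : Subgroup G)
    (M : Type) [AddCommGroup M] [Module (MonoidAlgebra K G) M] :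
    Submodule (MonoidAlgebra K G) M :=
  Submodule.span (MonoidAlgebra K G)
    {x : M | ∃ u ∈ U, ∃ m : M, x = (MonoidAlgebra.of K G u) • m - m}

/-- The normalized dimension of the `U`-coinvariants of `M`:
`dim_{𝔽_p}(𝔽_p ⊗_{𝔽_p[U]} M) / |G : U|`. -/
noncomputable def normCoinvDim (p : ℕ) [Fact p.Prime] (G : Type) [Group G] (U : Subgroup G)
    (M : Type) [AddCommGroup M] [Module (MonoidAlgebra (ZMod p) G) M] : ℝ :=
  (Module.finrank (ZMod p)
      (RestrictScalars (ZMod p) (MonoidAlgebra (ZMod p) G)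
        (M ⧸ coinvKer (ZMod p) G U M)) : ℝ) / (U.index : ℝ)

open Module Submodule Representation MonoidAlgebra

namespace Representation

variable {p : ℕ} [Fact p.Prime] {P V : Type*} [Group P] [AddCommGroup V] [Module (ZMod p) V]
  [Finite V]

theorem exists_dual_ne_zero_forall_comp_eq (hP : IsPGroup p P) (ρ : Representation (ZMod p) P V)
    [Nontrivial V] : ∃ φ : Dual (ZMod p) V, φ ≠ 0 ∧ ∀ g, φ ∘ₗ ρ g = φ := by
  let _ : MulAction P (Dual (ZMod p) V) := MulAction.compHom _ ρ.dual
  have : Finite (Dual (ZMod p) V) := Module.finite_of_finite (ZMod p)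
  have hcard : p ∣ Nat.card (Dual (ZMod p) V) := by
    rw [Module.natCard_eq_pow_finrank (K := ZMod p), Subspace.dual_finrank_eq, Nat.card_zmod]
    exact dvd_pow_self p Module.finrank_pos.ne'
  obtain ⟨φ, hφ, hne⟩ := hP.exists_fixed_point_of_prime_dvd_card_of_fixed_point _ hcard
    (a := 0) fun g => map_zero (ρ.dual g)
  refine ⟨φ, hne.symm, fun g => ?_⟩
  have : ρ.dual g⁻¹ φ = φ := hφ g⁻¹
  simpa [Module.Dual.transpose_apply] using this

theorem coinvariantsKer_ne_top (hP : IsPGroup p P) (ρ : Representation (ZMod p) P V)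
    [Nontrivial V] : Coinvariants.ker ρ ≠ ⊤ := by
  obtain ⟨φ, hφ, hfix⟩ := exists_dual_ne_zero_forall_comp_eq hP ρ
  intro htop
  refine hφ (LinearMap.ext fun x => ?_)
  have hker : Coinvariants.ker ρ ≤ LinearMap.ker φ := Submodule.span_le.2 <| by
    rintro _ ⟨⟨g, y⟩, rfl⟩
    simp [← LinearMap.comp_apply, hfix]
  exact hker (htop ▸ Submodule.mem_top)

theorem eq_top_of_sup_coinvariantsKer_eq_top (hP : IsPGroup p P) (ρ : Representation (ZMod p) P V)
    {W : Submodule (ZMod p) V} (hW : ∀ g, W ≤ W.comap (ρ g))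
    (h : W ⊔ Coinvariants.ker ρ = ⊤) : W = ⊤ := by
  by_contra hne
  have : Nontrivial (V ⧸ W) := Submodule.Quotient.nontrivial_iff.2 hne
  have : Finite (V ⧸ W) := Finite.of_surjective _ W.mkQ_surjective
  refine coinvariantsKer_ne_top hP (ρ.quotient W hW) (eq_top_iff.2 ?_)
  rw [← (Submodule.map_mkQ_eq_top _ _).2 h, Coinvariants.ker, Submodule.map_span_le]
  rintro _ ⟨⟨g, y⟩, rfl⟩
  exact Coinvariants.mem_ker_of_eq g (W.mkQ y) _ (by simp)

theorem finrank_le_index_mul_finrank_coinvariants (hP : IsPGroup p P)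
    (ρ : Representation (ZMod p) P V) (U : Subgroup P) [U.FiniteIndex]
    [IsTrivial (ρ.comp U.subtype)] :
    finrank (ZMod p) V ≤ U.index * finrank (ZMod p) (Coinvariants ρ) := by
  have := Fintype.ofFinite (P ⧸ U)
  let e := Module.finBasis (ZMod p) (Coinvariants ρ)
  choose b hb using fun i => Coinvariants.mk_surjective ρ (e i)
  let v : (P ⧸ U) × Fin (finrank (ZMod p) (Coinvariants ρ)) → V := fun x => ρ x.1.out (b x.2)
  have hρ (g : P) : ρ g = ρ (g : P ⧸ U).out :=
    apply_eq_of_coe_eq ρ U _ _ (QuotientGroup.out_eq' _).symm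
  have hinv (g : P) : span (ZMod p) (Set.range v) ≤ (span (ZMod p) (Set.range v)).comap (ρ g) := by
    rw [Submodule.span_le]
    rintro _ ⟨⟨q, i⟩, rfl⟩
    refine Submodule.subset_span ⟨⟨g * q.out, i⟩, ?_⟩
    simp [v, ← hρ]
  have hbv : span (ZMod p) (Set.range b) ≤ span (ZMod p) (Set.range v) := by
    rw [Submodule.span_le]
    rintro _ ⟨i, rfl⟩
    refine Submodule.subset_span ⟨⟨((1 : P) : P ⧸ U), i⟩, ?_⟩
    simp [v, ← hρ]
  have hsup : span (ZMod p) (Set.range b) ⊔ Coinvariants.ker ρ = ⊤ := by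
    rw [sup_comm, ← Submodule.map_mkQ_eq_top, Submodule.map_span, ← Set.range_comp]
    change span (ZMod p) (Set.range (Coinvariants.mk ρ ∘ b)) = ⊤
    rw [show Coinvariants.mk ρ ∘ b = e from funext hb, e.span_eq]
  have htop := eq_top_of_sup_coinvariantsKer_eq_top hP ρ hinv
    (top_le_iff.1 (hsup ▸ sup_le_sup_right hbv _))
  calc finrank (ZMod p) V = finrank (ZMod p) (span (ZMod p) (Set.range v)) := by
        rw [htop, finrank_top]
    _ ≤ Fintype.card ((P ⧸ U) × Fin (finrank (ZMod p) (Coinvariants ρ))) :=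
        finrank_range_le_card v
    _ = U.index * finrank (ZMod p) (Coinvariants ρ) := by
        simp [Subgroup.index, Nat.card_eq_fintype_card]

end Representation

section GroupAlgebra

variable {k G : Type} [Field k] [Group G]

theorem coinvKer_mono {U₁ U₂ : Subgroup G} (h : U₁ ≤ U₂) (X : Type) [AddCommGroup X]
    [Module k[G] X] : coinvKer k G U₁ X ≤ coinvKer k G U₂ X :=
  span_mono fun _ ⟨u, hu, m, hx⟩ => ⟨u, h hu, m, hx⟩

theorem map_coinvKer_of_surjective (U : Subgroup G) {X Y : Type} [AddCommGroup X]
    [Module k[G] X] [AddCommGroup Y] [Module k[G] Y] {f : X →ₗ[k[G]] Y}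
    (hf : Function.Surjective f) : (coinvKer k G U X).map f = coinvKer k G U Y := by
  rw [coinvKer, coinvKer, map_span]
  congr 1
  ext y
  constructor
  · rintro ⟨_, ⟨u, hu, m, rfl⟩, rfl⟩
    exact ⟨u, hu, f m, by simp⟩
  · rintro ⟨u, hu, y, rfl⟩
    obtain ⟨m, rfl⟩ := hf y
    exact ⟨_, ⟨u, hu, m, rfl⟩, by simp⟩

theorem of_smul_mk_coinvKer {U : Subgroup G} {u : G} (hu : u ∈ U) {X : Type} [AddCommGroup X]
    [Module k[G] X] (x : X) :
    of k G u • (Submodule.Quotient.mk x : X ⧸ coinvKer k G U X) = Submodule.Quotient.mk x := by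
  rw [← Submodule.Quotient.mk_smul, ← sub_eq_zero, ← Submodule.Quotient.mk_sub,
    Submodule.Quotient.mk_eq_zero]
  exact subset_span ⟨u, hu, x, rfl⟩

variable (X : Type) [AddCommGroup X] [Module k X] [Module k[G] X] [IsScalarTower k k[G] X]

instance isTrivial_ofModule'_quotient_coinvKer (U : Subgroup G) :
    IsTrivial ((ofModule' (k := k) (X ⧸ coinvKer k G U X)).comp U.subtype) :=
  ⟨fun u => LinearMap.ext fun x => by
    induction x using Submodule.Quotient.induction_on
    exact of_smul_mk_coinvKer u.2 _⟩

/-- For normal `U`, the `k[G]`-span of the `u • x - x` is already their `k`-span, because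
conjugation by `G` permutes these generators. -/
theorem restrictScalars_coinvKer {U : Subgroup G} (hU : U.Normal) :
    (coinvKer k G U X).restrictScalars k =
      Coinvariants.ker ((ofModule' (k := k) X).comp U.subtype) := by
  refine le_antisymm (fun x hx => ?_) (span_le.2 ?_)
  · induction hx using span_induction with
    | mem _ h =>
      obtain ⟨u, hu, m, rfl⟩ := h
      exact Coinvariants.mem_ker_of_eq (⟨u, hu⟩ : U) m _ rfl
    | zero => exact zero_mem _
    | add _ _ _ _ h₁ h₂ => exact add_mem h₁ h₂
    | smul a _ _ h =>
      induction a using MonoidAlgebra.induction_on with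
      | of g => exact Coinvariants.le_comap_ker (ofModule' (k := k) X) U g h
      | add a b ha hb => rw [add_smul]; exact add_mem ha hb
      | smul c a ha => rw [smul_assoc]; exact Submodule.smul_mem _ c ha
  · rintro _ ⟨⟨u, m⟩, rfl⟩
    exact subset_span ⟨u, u.2, m, rfl⟩

theorem finrank_restrictScalars_eq :
    finrank k (RestrictScalars k k[G] X) = finrank k X :=
  LinearEquiv.finrank_eq
    { RestrictScalars.addEquiv k k[G] X with
      map_smul' := fun c x =>
        algebraMap_smul k[G] c (RestrictScalars.addEquiv k k[G] X x) }

theorem finrank_quotient_coinvKer {U : Subgroup G} (hU : U.Normal) :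
    finrank k (X ⧸ coinvKer k G U X) =
      finrank k (Coinvariants ((ofModule' (k := k) X).comp U.subtype)) :=
  LinearEquiv.finrank_eq <| (Quotient.restrictScalarsEquiv k _).symm ≪≫ₗ
    quotEquivOfEq _ _ (restrictScalars_coinvKer X hU)

end GroupAlgebra

theorem stmt14_general (p : ℕ) [Fact p.Prime] (G : Type) [Group G] [Finite G]
    (hG : IsPGroup p G)
    (U₁ U₂ : Subgroup G) (h12 : U₁ ≤ U₂) (h2 : U₂.Normal)
    (M : Type) [AddCommGroup M] [Module (MonoidAlgebra (ZMod p) G) M]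
    (hM : Module.Finite (MonoidAlgebra (ZMod p) G) M) :
    normCoinvDim p G U₁ M ≤ normCoinvDim p G U₂ M := by
  let N := M ⧸ coinvKer (ZMod p) G U₁ M
  let e : (N ⧸ coinvKer (ZMod p) G U₂ N) ≃ₗ[(ZMod p)[G]] M ⧸ coinvKer (ZMod p) G U₂ M :=
    quotEquivOfEq _ _ (map_coinvKer_of_surjective U₂ (mkQ_surjective _)).symm ≪≫ₗ
      quotientQuotientEquivQuotient _ _ (coinvKer_mono (k := ZMod p) h12 M)
  let _ : Module (ZMod p) M := Module.compHom M (algebraMap (ZMod p) (ZMod p)[G])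
  have : IsScalarTower (ZMod p) (ZMod p)[G] M := IsScalarTower.of_compHom _ _ _
  have : Finite (ZMod p)[G] := Module.finite_of_finite (ZMod p)
  have : Finite M := Module.finite_of_finite (ZMod p)[G]
  have : Finite N := Finite.of_surjective _ (mkQ_surjective _)
  let ρ := (ofModule' (k := ZMod p) N).comp U₂.subtype
  have : IsTrivial (ρ.comp (U₁.subgroupOf U₂).subtype) :=
    ⟨fun u => isTrivial_def ((ofModule' (k := ZMod p) N).comp U₁.subtype) ⟨u, u.2⟩⟩
  have key := finrank_le_index_mul_finrank_coinvariants (hG.to_subgroup U₂) ρ (U₁.subgroupOf U₂)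
  rw [← finrank_quotient_coinvKer N h2, (e.restrictScalars (ZMod p)).finrank_eq] at key
  have hindex (U : Subgroup G) : (0 : ℝ) < U.index :=
    Nat.cast_pos.2 (Nat.pos_of_ne_zero Subgroup.index_ne_zero_of_finite)
  rw [normCoinvDim, normCoinvDim, finrank_restrictScalars_eq, finrank_restrictScalars_eq,
    div_le_div_iff₀ (hindex U₁) (hindex U₂), ← Subgroup.relIndex_mul_index h12]
  exact_mod_cast (Nat.mul_le_mul_right U₂.index key).trans_eq (by rw [Subgroup.relIndex]; ring)

/-- Let `G` be a finite `p`-group and `U₁ ≤ U₂` two normal subgroups.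
Then for every finitely generated `𝔽_p[G]`-module `M`,
`dim_{𝔽_p}(𝔽_p ⊗_{𝔽_p[U₁]} M)/|G:U₁| ≤ dim_{𝔽_p}(𝔽_p ⊗_{𝔽_p[U₂]} M)/|G:U₂|`. -/
theorem stmt14 (p : ℕ) [Fact p.Prime] (G : Type) [Group G] [Finite G]
    (hG : IsPGroup p G)
    (U₁ U₂ : Subgroup G) (h12 : U₁ ≤ U₂) (h1 : U₁.Normal) (h2 : U₂.Normal)
    (M : Type) [AddCommGroup M] [Module (MonoidAlgebra (ZMod p) G) M]
    (hM : Module.Finite (MonoidAlgebra (ZMod p) G) M) :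
    normCoinvDim p G U₁ M ≤ normCoinvDim p G U₂ M :=
  stmt14_general p G hG U₁ U₂ h12 h2 M hM
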